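/- arXiv:1311.3323 — 4 statements merged into one kernel-verified Lean document; each statement's English description precedes it below -/
import Mathlib

section
/- Let U = [0,1] × [0,1] be the unit square and let Γ be a segment barrier for U with total length L. Then L ≥ 2. -/
open MeasureTheory Set

noncomputable section

/-- A point in the plane. -/
abbrev Pt : Type := EuclideanSpace ℝ (Fin 2)

/-- A line in ℝ² is a set {p + t • v : t ∈ ℝ} for some p, v with v ≠ 0. -/
def IsLine (l : Set Pt) : Prop :=
  ∃ p v : Pt, v ≠ 0 ∧ l = {q : Pt | ∃ t : ℝ, q = p + t • v}

/-- Γ is a barrier (opaque set) for C if every line meeting C also meets Γ. -/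
def IsBarrier (Γ C : Set Pt) : Prop :=
  ∀ l : Set Pt, IsLine l → (l ∩ C).Nonempty → (l ∩ Γ).Nonempty

/-- The closed unit square U = [0,1] × [0,1]. -/
def unitSquare : Set Pt := {p : Pt | p 0 ∈ Icc (0:ℝ) 1 ∧ p 1 ∈ Icc (0:ℝ) 1}

/-!
Project along the two diagonals. Every line of slope `-1` through `U` meets `Γ`, so the images of
the segments under `p ↦ p 0 + p 1` cover `[0, 2]`; likewise, under `p ↦ p 0 - p 1` they cover
`[-1, 1]`. Summing, `Σ (|dᵢ 0 + dᵢ 1| + |dᵢ 0 - dᵢ 1|) ≥ 4` for the directions `dᵢ = bᵢ - aᵢ`,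
while `|x + y| + |x - y| = 2 max (|x|, |y|) ≤ 2 ‖(x, y)‖`.
-/

theorem sub_le_tsum_of_Icc_subset_iUnion_uIcc {ι : Type*} [Countable ι] {s t : ℝ}
    {x y : ι → ℝ} (hcover : Icc s t ⊆ ⋃ i, uIcc (x i) (y i))
    (hsum : Summable fun i => |y i - x i|) :
    t - s ≤ ∑' i, |y i - x i| := by
  rw [← ENNReal.ofReal_le_ofReal_iff (tsum_nonneg fun i => abs_nonneg _),
    ENNReal.ofReal_tsum_of_nonneg (fun i => abs_nonneg _) hsum, ← Real.volume_Icc]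
  calc volume (Icc s t) ≤ volume (⋃ i, uIcc (x i) (y i)) := measure_mono hcover
    _ ≤ ∑' i, volume (uIcc (x i) (y i)) := measure_iUnion_le _
    _ = ∑' i, ENNReal.ofReal |y i - x i| := by simp only [Real.volume_interval]

theorem IsBarrier.image_subset_image {Γ C : Set Pt} (hbar : IsBarrier Γ C)
    (f : Pt →ₗ[ℝ] ℝ) {v : Pt} (hv : v ≠ 0) (hfv : f v = 0) : f '' C ⊆ f '' Γ := by
  rintro _ ⟨p, hpC, rfl⟩
  obtain ⟨_, ⟨t, rfl⟩, hΓ⟩ := hbar _ ⟨p, v, hv, rfl⟩ ⟨p, ⟨0, by simp⟩, hpC⟩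
  exact ⟨p + t • v, hΓ, by simp [hfv]⟩

theorem IsBarrier.sub_le_tsum_abs_of_Icc_subset_image {ι : Type*} [Countable ι] {C : Set Pt}
    {a b : ι → Pt} (hbar : IsBarrier (⋃ i, segment ℝ (a i) (b i)) C)
    (f : Pt →ₗ[ℝ] ℝ) {v : Pt} (hv : v ≠ 0) (hfv : f v = 0) {s t : ℝ}
    (hIcc : Icc s t ⊆ f '' C) (hsum : Summable fun i => |f (b i - a i)|) :
    t - s ≤ ∑' i, |f (b i - a i)| := by
  simp only [map_sub] at hsum ⊢
  refine sub_le_tsum_of_Icc_subset_iUnion_uIcc ?_ hsum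
  have h := hIcc.trans (hbar.image_subset_image f hv hfv)
  simpa only [image_iUnion, ← f.coe_toAffineMap, image_segment, segment_eq_uIcc] using h

def diagSum : Pt →ₗ[ℝ] ℝ := (EuclideanSpace.proj 0 + EuclideanSpace.proj 1 : Pt →L[ℝ] ℝ)

def diagDiff : Pt →ₗ[ℝ] ℝ := (EuclideanSpace.proj 0 - EuclideanSpace.proj 1 : Pt →L[ℝ] ℝ)

@[simp] theorem diagSum_apply (p : Pt) : diagSum p = p 0 + p 1 := rfl

@[simp] theorem diagDiff_apply (p : Pt) : diagDiff p = p 0 - p 1 := rfl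

theorem Icc_subset_image_diagSum_unitSquare : Icc 0 2 ⊆ diagSum '' unitSquare := by
  rintro c ⟨hc₀, hc₂⟩
  refine ⟨!₂[c / 2, c / 2], ?_, by simp⟩
  refine ⟨⟨?_, ?_⟩, ?_, ?_⟩ <;> simp <;> linarith

theorem Icc_subset_image_diagDiff_unitSquare : Icc (-1) 1 ⊆ diagDiff '' unitSquare := by
  rintro c ⟨hc₀, hc₁⟩
  refine ⟨!₂[(1 + c) / 2, (1 - c) / 2], ?_, by simp; ring⟩
  refine ⟨⟨?_, ?_⟩, ?_, ?_⟩ <;> simp <;> linarith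

theorem abs_diagSum_add_abs_diagDiff_le (d : Pt) : |diagSum d| + |diagDiff d| ≤ 2 * ‖d‖ := by
  have hsq : ‖d‖ ^ 2 = d 0 ^ 2 + d 1 ^ 2 := by
    simp [EuclideanSpace.norm_sq_eq, Fin.sum_univ_two]
  have hnorm := norm_nonneg d
  rw [diagSum_apply, diagDiff_apply]
  rcases abs_cases (d 0 + d 1) with ⟨h₁, _⟩ | ⟨h₁, _⟩ <;>
  rcases abs_cases (d 0 - d 1) with ⟨h₂, _⟩ | ⟨h₂, _⟩ <;> rw [h₁, h₂] <;>
  nlinarith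

theorem segment_barrier_unit_square_length_ge_two_general
    (a b : ℕ → Pt)
    (hbar : IsBarrier (⋃ i, segment ℝ (a i) (b i)) unitSquare)
    (hsum : Summable fun i => ‖b i - a i‖) :
    (2 : ℝ) ≤ ∑' i, ‖b i - a i‖ := by
  have hbound i := abs_diagSum_add_abs_diagDiff_le (b i - a i)
  have hsumS : Summable fun i => |diagSum (b i - a i)| :=
    (hsum.mul_left 2).of_nonneg_of_le (fun _ => abs_nonneg _) fun i =>
      (le_add_of_nonneg_right (abs_nonneg _)).trans (hbound i)
  have hsumD : Summable fun i => |diagDiff (b i - a i)| :=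
    (hsum.mul_left 2).of_nonneg_of_le (fun _ => abs_nonneg _) fun i =>
      (le_add_of_nonneg_left (abs_nonneg _)).trans (hbound i)
  have hS := hbar.sub_le_tsum_abs_of_Icc_subset_image diagSum (v := !₂[1, -1])
    (by simp) (by simp) Icc_subset_image_diagSum_unitSquare hsumS
  have hD := hbar.sub_le_tsum_abs_of_Icc_subset_image diagDiff (v := !₂[1, 1])
    (by simp) (by simp) Icc_subset_image_diagDiff_unitSquare hsumD
  have hsum_le : ∑' i, (|diagSum (b i - a i)| + |diagDiff (b i - a i)|)
      ≤ 2 * ∑' i, ‖b i - a i‖ := by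
    rw [← tsum_mul_left]
    exact (hsumS.add hsumD).tsum_le_tsum hbound (hsum.mul_left 2)
  rw [hsumS.tsum_add hsumD] at hsum_le
  linarith

/-- any segment barrier for the unit square has total length at least 2. -/
theorem segment_barrier_unit_square_length_ge_two
    (a b : ℕ → Pt) (hab : ∀ i, a i ≠ b i)
    (hbar : IsBarrier (⋃ i, segment ℝ (a i) (b i)) unitSquare)
    (hsum : Summable fun i => ‖b i - a i‖) :
    (2 : ℝ) ≤ ∑' i, ‖b i - a i‖ :=
  segment_barrier_unit_square_length_ge_two_general a b hbar hsum
end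
end

section
/- Let ℓ₁, …, ℓₙ be nonnegative real numbers and θ₁, …, θₙ real numbers (angles). If Σᵢ ℓᵢ |cos θᵢ| ≥ √2 and Σᵢ ℓᵢ |sin θᵢ| ≥ √2, then Σᵢ ℓᵢ ≥ 2. -/
/-!
For every angle, `|cos θ| + |sin θ| ≤ √2`, since `(|cos θ| + |sin θ|)² ≤ 2 (cos² θ + sin² θ) = 2`. Adding the
two blocking conditions and weighting this pointwise bound by the nonnegative lengths gives
`2√2 ≤ √2 · Σ ℓᵢ`.
-/

open Finset Real

theorem abs_add_abs_le_sqrt_two {a b : ℝ} (h : a ^ 2 + b ^ 2 = 1) : |a| + |b| ≤ √2 := by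
  apply Real.le_sqrt_of_sq_le
  nlinarith [sq_abs a, sq_abs b, sq_nonneg (|a| - |b|)]

theorem abs_cos_add_abs_sin_le_sqrt_two (x : ℝ) : |cos x| + |sin x| ≤ √2 :=
  abs_add_abs_le_sqrt_two (cos_sq_add_sin_sq x)

theorem sum_mul_abs_cos_add_sum_mul_abs_sin_le {ι : Type*} (s : Finset ι) (ℓ θ : ι → ℝ)
    (hℓ : ∀ i ∈ s, 0 ≤ ℓ i) :
    ∑ i ∈ s, ℓ i * |cos (θ i)| + ∑ i ∈ s, ℓ i * |sin (θ i)| ≤ √2 * ∑ i ∈ s, ℓ i := by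
  rw [← sum_add_distrib, mul_sum]
  refine sum_le_sum fun i hi => ?_
  rw [← mul_add, mul_comm]
  exact mul_le_mul_of_nonneg_right (abs_cos_add_abs_sin_le_sqrt_two (θ i)) (hℓ i hi)

/-- if nonnegative lengths ℓᵢ with angles θᵢ satisfy the two diagonal
blocking conditions Σ ℓᵢ|cos θᵢ| ≥ √2 and Σ ℓᵢ|sin θᵢ| ≥ √2, then Σ ℓᵢ ≥ 2. -/
theorem ozkan_inequality (n : ℕ) (ℓ θ : Fin n → ℝ) (hℓ : ∀ i, 0 ≤ ℓ i)
    (hcos : Real.sqrt 2 ≤ ∑ i, ℓ i * |Real.cos (θ i)|)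
    (hsin : Real.sqrt 2 ≤ ∑ i, ℓ i * |Real.sin (θ i)|) :
    2 ≤ ∑ i, ℓ i := by
  have hbound := sum_mul_abs_cos_add_sum_mul_abs_sin_le univ ℓ θ fun i _ => hℓ i
  refine le_of_mul_le_mul_left ?_ (sqrt_pos.mpr two_pos)
  linarith
end

section
/- With the setup parameters δ = 10⁻¹² and sin φ = 10⁻⁴, let Γ be a segment barrier for the unit square U with total length L ≤ 2 + δ, partitioned into the almost horizontal segments X, the almost vertical segments Y, and the remaining segments Z. Then 1 − (7/2)·10⁻⁴ ≤ |X| ≤ 1 + (3/2)·10⁻⁴ and 1 − (7/2)·10⁻⁴ ≤ |Y| ≤ 1 + (3/2)·10⁻⁴ (i.e., 1 − (7/2) sin φ ≤ |X|, |Y| ≤ 1 + (3/2) sin φ). -/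
/-!
Projecting onto a direction: if `f` is a linear functional, every level line of `f` through a
point of the square meets the barrier, so the intervals `f '' [aᵢ, bᵢ]` cover `f '' U`, and the
width of `U` in that direction is at most `∑ |f (bᵢ - aᵢ)|`. The two axes and the two diagonals
give `∑ |Δx| ≥ 1`, `∑ |Δy| ≥ 1` and `∑ max (|Δx|, |Δy|) ≥ 2`.

An almost horizontal segment contributes at most `sin φ` of its length to `∑ |Δy|`, so
`1 ≤ L - (1 - sin φ) |X|`, which bounds `|X|` from above. A segment in `Z` has
`max (|Δx|, |Δy|) ≤ (1 - sin² φ / 2) ℓ`, so `2 ≤ L - (sin² φ / 2) |Z|` and `|Z| ≤ 2δ / sin² φ`.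
Finally `1 ≤ ∑ |Δx| ≤ |X| + sin φ |Y| + |Z|` bounds `|X|` from below.
-/

open MeasureTheory Set

noncomputable section

/-- A segment [a, b] is almost horizontal if its direction makes angle at most
φ = arcsin 10⁻⁴ with the x-axis, i.e. |(b − a)₂| ≤ 10⁻⁴ ‖b − a‖. -/
def AlmostHorizontal (a b : Pt) : Prop := |(b - a) 1| ≤ 10 ^ (-4 : ℤ) * ‖b - a‖

/-- A segment [a, b] is almost vertical if its direction makes angle at most
φ = arcsin 10⁻⁴ with the y-axis, i.e. |(b − a)₁| ≤ 10⁻⁴ ‖b − a‖. -/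
def AlmostVertical (a b : Pt) : Prop := |(b - a) 0| ≤ 10 ^ (-4 : ℤ) * ‖b - a‖

theorem LinearMap.image_segment_eq_uIcc {E : Type*} [AddCommGroup E] [Module ℝ E]
    (f : E →ₗ[ℝ] ℝ) (p q : E) : f '' segment ℝ p q = uIcc (f p) (f q) := by
  simpa [segment_eq_uIcc] using image_segment ℝ f.toAffineMap p q

theorem summable_abs_map_sub {ι E : Type*} [NormedAddCommGroup E] [NormedSpace ℝ E]
    {a b : ι → E} (hsum : Summable fun i => ‖b i - a i‖) (f : E →L[ℝ] ℝ) :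
    Summable fun i => |f (b i - a i)| :=
  .of_nonneg_of_le (fun _ => abs_nonneg _) (fun _ => f.le_opNorm _) (hsum.mul_left ‖f‖)

theorem convex_unitSquare : Convex ℝ unitSquare := by
  have hcoord (j : Fin 2) : Convex ℝ {p : Pt | p j ∈ Icc (0 : ℝ) 1} :=
    (convex_Icc 0 1).linear_preimage (EuclideanSpace.proj j : Pt →L[ℝ] ℝ).toLinearMap
  exact (hcoord 0).inter (hcoord 1)

theorem segment_zero_subset_unitSquare : segment ℝ 0 !₂[1, 1] ⊆ unitSquare :=
  convex_unitSquare.segment_subset (by simp [unitSquare]) (by simp [unitSquare])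

theorem segment_antidiagonal_subset_unitSquare : segment ℝ !₂[0, 1] !₂[1, 0] ⊆ unitSquare :=
  convex_unitSquare.segment_subset (by simp [unitSquare]) (by simp [unitSquare])

theorem abs_add_add_abs_sub_eq_two_mul_max (p q : ℝ) : |p + q| + |p - q| = 2 * max |p| |q| := by
  rcases le_total |p| |q| with h | h <;> simp only [max_eq_left, max_eq_right, h] <;>
    cases abs_cases p <;> cases abs_cases q <;> cases abs_cases (p + q) <;>
    cases abs_cases (p - q) <;> linarith

section

variable {ι : Type*} [Countable ι] {a b : ι → Pt}

theorem IsBarrier.volume_image_le {C : Set Pt}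
    (hbar : IsBarrier (⋃ i, segment ℝ (a i) (b i)) C) (f : Pt →ₗ[ℝ] ℝ) :
    volume (f '' C) ≤ ∑' i, ENNReal.ofReal |f (b i) - f (a i)| := by
  obtain ⟨v, hv, hv0⟩ : ∃ v ∈ LinearMap.ker f, v ≠ 0 :=
    Submodule.exists_mem_ne_zero_of_ne_bot (f.ker_ne_bot_of_finrank_lt (by simp))
  -- `f` is constant on the line through `c` in the direction of `v`, which meets the barrier.
  have hcover : f '' C ⊆ ⋃ i, f '' segment ℝ (a i) (b i) := by
    rintro _ ⟨c, hc, rfl⟩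
    obtain ⟨z, ⟨t, rfl⟩, hz⟩ := hbar _ ⟨c, v, hv0, rfl⟩ ⟨c, ⟨0, by simp⟩, hc⟩
    obtain ⟨i, hi⟩ := mem_iUnion.mp hz
    exact mem_iUnion.mpr ⟨i, c + t • v, hi, by simp [LinearMap.mem_ker.mp hv]⟩
  calc volume (f '' C) ≤ volume (⋃ i, f '' segment ℝ (a i) (b i)) := measure_mono hcover
    _ ≤ ∑' i, volume (f '' segment ℝ (a i) (b i)) := measure_iUnion_le _
    _ = _ := by simp only [f.image_segment_eq_uIcc, Real.volume_interval]

theorem IsBarrier.abs_sub_le_tsum {C : Set Pt}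
    (hbar : IsBarrier (⋃ i, segment ℝ (a i) (b i)) C) (hsum : Summable fun i => ‖b i - a i‖)
    (f : Pt →L[ℝ] ℝ) {p q : Pt} (hpq : segment ℝ p q ⊆ C) :
    |f q - f p| ≤ ∑' i, |f (b i - a i)| := by
  rw [← ENNReal.ofReal_le_ofReal_iff (tsum_nonneg fun _ => abs_nonneg _),
    ENNReal.ofReal_tsum_of_nonneg (fun _ => abs_nonneg _) (summable_abs_map_sub hsum f)]
  simp_rw [map_sub]
  calc ENNReal.ofReal |f q - f p| = volume ((f : Pt →ₗ[ℝ] ℝ) '' segment ℝ p q) := by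
        rw [LinearMap.image_segment_eq_uIcc, Real.volume_interval]; rfl
    _ ≤ volume ((f : Pt →ₗ[ℝ] ℝ) '' C) := measure_mono (image_mono hpq)
    _ ≤ _ := hbar.volume_image_le f

theorem IsBarrier.one_le_tsum_abs_coord
    (hbar : IsBarrier (⋃ i, segment ℝ (a i) (b i)) unitSquare)
    (hsum : Summable fun i => ‖b i - a i‖) (j : Fin 2) : 1 ≤ ∑' i, |(b i - a i) j| := by
  have h := hbar.abs_sub_le_tsum hsum (EuclideanSpace.proj j) segment_zero_subset_unitSquare
  fin_cases j <;> simpa using h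

-- `x + y` and `x - y` both vary by 2 along a diagonal of the square.
theorem IsBarrier.two_le_tsum_max_abs_coord
    (hbar : IsBarrier (⋃ i, segment ℝ (a i) (b i)) unitSquare)
    (hsum : Summable fun i => ‖b i - a i‖) :
    2 ≤ ∑' i, max |(b i - a i) 0| |(b i - a i) 1| := by
  let e₀ : Pt →L[ℝ] ℝ := EuclideanSpace.proj 0
  let e₁ : Pt →L[ℝ] ℝ := EuclideanSpace.proj 1
  have hadd : 2 ≤ ∑' i, |(e₀ + e₁) (b i - a i)| := le_trans (by norm_num [e₀, e₁])
    (hbar.abs_sub_le_tsum hsum _ segment_zero_subset_unitSquare)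
  have hsub : 2 ≤ ∑' i, |(e₀ - e₁) (b i - a i)| := le_trans (by norm_num [e₀, e₁])
    (hbar.abs_sub_le_tsum hsum _ segment_antidiagonal_subset_unitSquare)
  have hmax (i : ι) : max |(b i - a i) 0| |(b i - a i) 1|
      = (|(e₀ + e₁) (b i - a i)| + |(e₀ - e₁) (b i - a i)|) / 2 := by
    simp [e₀, e₁, abs_add_add_abs_sub_eq_two_mul_max]
  rw [tsum_congr hmax, tsum_div_const, (summable_abs_map_sub hsum _).tsum_add
    (summable_abs_map_sub hsum _)]
  linarith

end

theorem abs_le_one_sub_sq_div_two_mul {x y ℓ s : ℝ} (hℓ : 0 ≤ ℓ) (hs : 0 ≤ s)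
    (hxy : ℓ ^ 2 = x ^ 2 + y ^ 2) (hy : s * ℓ ≤ |y|) : |x| ≤ (1 - s ^ 2 / 2) * ℓ := by
  have hyℓ : |y| ≤ ℓ := abs_le_of_sq_le_sq (by nlinarith) hℓ
  have hcoef : 0 ≤ (1 - s ^ 2 / 2) * ℓ := by nlinarith
  -- `x² = ℓ² - y² ≤ (1 - s²) ℓ² ≤ (1 - s² / 2)² ℓ²`
  refine abs_le_of_sq_le_sq ?_ hcoef
  nlinarith [sq_abs y, mul_le_mul hy hy (by positivity) (abs_nonneg y)]

theorem EuclideanSpace.max_abs_le_one_sub_sq_div_two_mul_norm {d : EuclideanSpace ℝ (Fin 2)}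
    {s : ℝ} (hs : 0 ≤ s) (h₀ : s * ‖d‖ ≤ |d 0|) (h₁ : s * ‖d‖ ≤ |d 1|) :
    max |d 0| |d 1| ≤ (1 - s ^ 2 / 2) * ‖d‖ := by
  have hd : ‖d‖ ^ 2 = d 0 ^ 2 + d 1 ^ 2 := by
    rw [EuclideanSpace.real_norm_sq_eq, Fin.sum_univ_two]
  exact max_le (abs_le_one_sub_sq_div_two_mul (norm_nonneg d) hs hd h₁)
    (abs_le_one_sub_sq_div_two_mul (norm_nonneg d) hs (by rw [hd, add_comm]) h₀)

theorem tsum_le_tsum_sub_mul_tsum_subtype {ι : Type*} {g ℓ : ι → ℝ} {P : ι → Prop} {c : ℝ}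
    (hℓ : Summable ℓ) (hg : ∀ i, 0 ≤ g i) (hgℓ : ∀ i, g i ≤ ℓ i)
    (hgP : ∀ i, P i → g i ≤ (1 - c) * ℓ i) :
    ∑' i, g i ≤ ∑' i, ℓ i - c * ∑' i : {i // P i}, ℓ i := by
  have hPℓ := hℓ.indicator {i | P i}
  have hP : ∑' i : {i // P i}, ℓ i = ∑' i, {i | P i}.indicator ℓ i := tsum_subtype {i | P i} ℓ
  rw [hP, ← tsum_mul_left, ← hℓ.tsum_sub (hPℓ.mul_left c)]
  refine (hℓ.of_nonneg_of_le hg hgℓ).tsum_le_tsum (fun i => ?_) (hℓ.sub (hPℓ.mul_left c))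
  by_cases hi : P i
  · simpa [hi, sub_mul] using hgP i hi
  · simpa [hi] using hgℓ i

theorem tsum_le_tsum_subtype_add_tsum_subtype_add_tsum_subtype {ι : Type*} {ℓ : ι → ℝ}
    (hℓ : Summable ℓ) (hℓ₀ : ∀ i, 0 ≤ ℓ i) (P Q : ι → Prop) :
    ∑' i, ℓ i ≤ ∑' i : {i // P i}, ℓ i + ∑' i : {i // Q i}, ℓ i
      + ∑' i : {i // ¬P i ∧ ¬Q i}, ℓ i := by
  have hP : ∑' i : {i // P i}, ℓ i = ∑' i, {i | P i}.indicator ℓ i := tsum_subtype {i | P i} ℓ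
  have hQ : ∑' i : {i // Q i}, ℓ i = ∑' i, {i | Q i}.indicator ℓ i := tsum_subtype {i | Q i} ℓ
  have hR : ∑' i : {i // ¬P i ∧ ¬Q i}, ℓ i = ∑' i, {i | ¬P i ∧ ¬Q i}.indicator ℓ i :=
    tsum_subtype {i | ¬P i ∧ ¬Q i} ℓ
  have hPQ := (hℓ.indicator {i | P i}).add (hℓ.indicator {i | Q i})
  rw [hP, hQ, hR, ← (hℓ.indicator _).tsum_add (hℓ.indicator _),
    ← hPQ.tsum_add (hℓ.indicator _)]
  refine hℓ.tsum_le_tsum (fun i => ?_) (hPQ.add (hℓ.indicator _))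
  by_cases hPi : P i <;> by_cases hQi : Q i <;> simp [indicator, hPi, hQi, hℓ₀]

theorem X_Y_length_close_to_one_general
    (a b : ℕ → Pt)
    (hbar : IsBarrier (⋃ i, segment ℝ (a i) (b i)) unitSquare)
    (hsum : Summable fun i => ‖b i - a i‖)
    (hL : ∑' i, ‖b i - a i‖ ≤ 2 + 10 ^ (-12 : ℤ)) :
    (1 - (7/2) * 10 ^ (-4 : ℤ) ≤
        ∑' i : {j : ℕ // AlmostHorizontal (a j) (b j)}, ‖b i.1 - a i.1‖) ∧
    (∑' i : {j : ℕ // AlmostHorizontal (a j) (b j)}, ‖b i.1 - a i.1‖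
        ≤ 1 + (3/2) * 10 ^ (-4 : ℤ)) ∧
    (1 - (7/2) * 10 ^ (-4 : ℤ) ≤
        ∑' i : {j : ℕ // AlmostVertical (a j) (b j)}, ‖b i.1 - a i.1‖) ∧
    (∑' i : {j : ℕ // AlmostVertical (a j) (b j)}, ‖b i.1 - a i.1‖
        ≤ 1 + (3/2) * 10 ^ (-4 : ℤ)) := by
  have h₀ := hbar.one_le_tsum_abs_coord hsum 0
  have h₁ := hbar.one_le_tsum_abs_coord hsum 1
  have hmax := hbar.two_le_tsum_max_abs_coord hsum
  set s : ℝ := 10 ^ (-4 : ℤ) with hs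
  have hcoord (i : ℕ) (j : Fin 2) : |(b i - a i) j| ≤ ‖b i - a i‖ :=
    Real.norm_eq_abs _ ▸ PiLp.norm_apply_le _ j
  have hX := tsum_le_tsum_sub_mul_tsum_subtype (c := 1 - s) hsum (fun _ => abs_nonneg _)
    (fun i => hcoord i 1) (P := fun j => AlmostHorizontal (a j) (b j))
    (fun _ hi => by rwa [sub_sub_cancel])
  have hY := tsum_le_tsum_sub_mul_tsum_subtype (c := 1 - s) hsum (fun _ => abs_nonneg _)
    (fun i => hcoord i 0) (P := fun j => AlmostVertical (a j) (b j))
    (fun _ hi => by rwa [sub_sub_cancel])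
  have hZ := tsum_le_tsum_sub_mul_tsum_subtype (c := s ^ 2 / 2) hsum
    (fun _ => le_max_of_le_left (abs_nonneg _)) (fun i => max_le (hcoord i 0) (hcoord i 1))
    (P := fun j => ¬AlmostHorizontal (a j) (b j) ∧ ¬AlmostVertical (a j) (b j))
    (fun i hi => EuclideanSpace.max_abs_le_one_sub_sq_div_two_mul_norm (by positivity)
      (not_le.mp hi.2).le (not_le.mp hi.1).le)
  have hXYZ := tsum_le_tsum_subtype_add_tsum_subtype_add_tsum_subtype hsum
    (fun _ => norm_nonneg _) (fun j => AlmostHorizontal (a j) (b j))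
    (fun j => AlmostVertical (a j) (b j))
  norm_num [hs] at hX hY hZ hL h₀ h₁ hmax ⊢
  refine ⟨?_, ?_, ?_, ?_⟩ <;> linarith

/-- Lemma 4: for a segment barrier of the unit square of total length at
most 2 + δ (δ = 10⁻¹², sin φ = 10⁻⁴), the total length |X| of almost horizontal segments
and the total length |Y| of almost vertical segments satisfy
1 − (7/2) sin φ ≤ |X|, |Y| ≤ 1 + (3/2) sin φ. -/
theorem X_Y_length_close_to_one
    (a b : ℕ → Pt) (hab : ∀ i, a i ≠ b i)
    (hbar : IsBarrier (⋃ i, segment ℝ (a i) (b i)) unitSquare)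
    (hsum : Summable fun i => ‖b i - a i‖)
    (hL : ∑' i, ‖b i - a i‖ ≤ 2 + 10 ^ (-12 : ℤ)) :
    (1 - (7/2) * 10 ^ (-4 : ℤ) ≤
        ∑' i : {j : ℕ // AlmostHorizontal (a j) (b j)}, ‖b i.1 - a i.1‖) ∧
    (∑' i : {j : ℕ // AlmostHorizontal (a j) (b j)}, ‖b i.1 - a i.1‖
        ≤ 1 + (3/2) * 10 ^ (-4 : ℤ)) ∧
    (1 - (7/2) * 10 ^ (-4 : ℤ) ≤
        ∑' i : {j : ℕ // AlmostVertical (a j) (b j)}, ‖b i.1 - a i.1‖) ∧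
    (∑' i : {j : ℕ // AlmostVertical (a j) (b j)}, ‖b i.1 - a i.1‖
        ≤ 1 + (3/2) * 10 ^ (-4 : ℤ)) :=
  X_Y_length_close_to_one_general a b hbar hsum hL
end
end

section
/- With the setup parameters δ = 10⁻¹² and sin φ = 10⁻⁴, let Γ be a segment barrier for the unit square U with total length L ≤ 2 + δ, partitioned into the almost horizontal segments X, the almost vertical segments Y, and the remaining segments Z. Let V = [0,1] × ℝ be the vertical strip of unit width containing U and H = ℝ × [0,1] the horizontal strip of unit width containing U. Then Σ_{s ∈ X} H¹(s \ V) ≤ (9/2)·10⁻⁴ and Σ_{s ∈ Y} H¹(s \ H) ≤ (9/2)·10⁻⁴ (i.e., |X ∩ V̄| ≤ (9/2) sin φ and |Y ∩ H̄| ≤ (9/2) sin φ). -/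
open MeasureTheory Set

noncomputable section

open scoped ENNReal

/-! Project the barrier onto the two axes and the two diagonals. A line orthogonal to the
direction of projection that meets `U` meets `Γ`, so the shadows of the segments cover intervals
of lengths `1, 1, 2, 2`. An almost horizontal segment casts its shadow on `[0,1] × {0}` only from
its part inside `V`, and a shadow of length at most `sin φ` times its length on the `y`-axis; a
segment of `Z` has both coordinate projections at most `√(1 - sin² φ)` times its length, so its
two diagonal shadows add up to at most `2 - sin² φ` times its length. Weighting the diagonal
shadows by `1 / sin² φ = 10⁸`, every segment pays at most `2·10⁸ + 1 + sin φ` times its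
length for its shadows plus its length outside the relevant strip; comparing with `L ≤ 2 + δ`
leaves `2 sin φ + (2·10⁸ + 1 + sin φ) δ < (9/2) sin φ` for `|X \ V| + |Y \ H|`. -/

lemma EuclideanSpace.volume_image_apply_le {ι : Type*} [Fintype ι] (k : ι)
    (A : Set (EuclideanSpace ℝ ι)) :
    volume ((fun x : EuclideanSpace ℝ ι => x k) '' A) ≤ μH[1] A := by
  have hk : LipschitzWith 1 (fun x : EuclideanSpace ℝ ι => x k) :=
    LipschitzWith.mk_one fun x y => PiLp.dist_apply_le x y k
  simpa [hausdorffMeasure_real] using hk.hausdorffMeasure_image_le zero_le_one A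

lemma volume_image_segment {E : Type*} [AddCommGroup E] [Module ℝ E] (f : E →ₗ[ℝ] ℝ)
    (a b : E) : volume (f '' segment ℝ a b) = ENNReal.ofReal |f (b - a)| := by
  have := image_segment ℝ f.toAffineMap a b
  simp only [LinearMap.coe_toAffineMap] at this
  rw [this, segment_eq_uIcc, Real.volume_interval, map_sub]

lemma abs_add_add_abs_sub_le {u w m : ℝ} (hu : |u| ≤ m) (hw : |w| ≤ m) :
    |u + w| + |u - w| ≤ 2 * m := by
  rw [abs_le] at hu hw
  rcases abs_cases (u + w) with ⟨h₁, -⟩ | ⟨h₁, -⟩ <;>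
    rcases abs_cases (u - w) with ⟨h₂, -⟩ | ⟨h₂, -⟩ <;> linarith

lemma abs_le_of_sq_add_sq_eq {u w ℓ ε : ℝ} (h : u ^ 2 + w ^ 2 = ℓ ^ 2) (hℓ : 0 ≤ ℓ)
    (hε : 0 ≤ ε) (hw : ε * ℓ ≤ |w|) : |u| ≤ (1 - ε ^ 2 / 2) * ℓ := by
  have hw2 : (ε * ℓ) ^ 2 ≤ w ^ 2 := by
    rw [← sq_abs w]; exact pow_le_pow_left₀ (by positivity) hw 2
  exact abs_le_of_sq_le_sq (by nlinarith [sq_nonneg (ε ^ 2 * ℓ)]) (by nlinarith)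

lemma abs_add_add_abs_sub_le_of_le_abs {u w ℓ ε : ℝ} (h : u ^ 2 + w ^ 2 = ℓ ^ 2)
    (hℓ : 0 ≤ ℓ) (hε : 0 ≤ ε) (hu : ε * ℓ ≤ |u|) (hw : ε * ℓ ≤ |w|) :
    |u + w| + |u - w| ≤ (2 - ε ^ 2) * ℓ := by
  have := abs_add_add_abs_sub_le (abs_le_of_sq_add_sq_eq h hℓ hε hw)
    (abs_le_of_sq_add_sq_eq ((add_comm _ _).trans h) hℓ hε hu)
  linarith

lemma EuclideanSpace.norm_sq_fin_two (v : Pt) : ‖v‖ ^ 2 = v 0 ^ 2 + v 1 ^ 2 := by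
  simp [EuclideanSpace.norm_sq_eq, Fin.sum_univ_two]

lemma eq_zero_of_abs_apply_le {v : Pt} {ε : ℝ} (hε : 2 * ε ^ 2 < 1)
    (h₀ : |v 0| ≤ ε * ‖v‖) (h₁ : |v 1| ≤ ε * ‖v‖) : v = 0 := by
  have hsq := EuclideanSpace.norm_sq_fin_two v
  have h₀' := sq_le_sq' (abs_le.mp h₀).1 (abs_le.mp h₀).2
  have h₁' := sq_le_sq' (abs_le.mp h₁).1 (abs_le.mp h₁).2
  exact norm_eq_zero.mp (pow_eq_zero_iff two_ne_zero |>.mp (by nlinarith [sq_nonneg ‖v‖]))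

lemma IsBarrier.image_subset {Γ C : Set Pt} (h : IsBarrier Γ C) (f : Pt →ₗ[ℝ] ℝ) :
    f '' C ⊆ f '' Γ := by
  rintro _ ⟨p, hp, rfl⟩
  -- `f` is constant along the line through `p` in a direction of its kernel
  obtain ⟨v, hv, hv0⟩ := Submodule.exists_mem_ne_zero_of_ne_bot
    (LinearMap.ker_ne_bot_of_finrank_lt (f := f) (by simp))
  obtain ⟨_, ⟨t, rfl⟩, hq⟩ := h _ ⟨p, v, hv0, rfl⟩ ⟨p, ⟨0, by simp⟩, hp⟩
  exact ⟨_, hq, by simp [LinearMap.mem_ker.mp hv]⟩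

lemma IsBarrier.volume_le_tsum {ι : Type*} [Countable ι] {s : ι → Set Pt} {C : Set Pt}
    (h : IsBarrier (⋃ i, s i) C) (f : Pt →ₗ[ℝ] ℝ) {I : Set ℝ} (hI : I ⊆ f '' C) :
    volume I ≤ ∑' i, volume (f '' s i ∩ I) := by
  have hcov : I ⊆ ⋃ i, f '' s i ∩ I := fun x hx => by
    obtain ⟨i, hi⟩ := mem_iUnion.mp (image_iUnion ▸ h.image_subset f (hI hx))
    exact mem_iUnion.mpr ⟨i, hi, hx⟩
  exact (measure_mono hcov).trans (measure_iUnion_le _)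

lemma IsBarrier.volume_le_tsum_segment {a b : ℕ → Pt} {C : Set Pt}
    (h : IsBarrier (⋃ i, segment ℝ (a i) (b i)) C) (f : Pt →ₗ[ℝ] ℝ) {I : Set ℝ}
    (hI : I ⊆ f '' C) : volume I ≤ ∑' i, ENNReal.ofReal |f (b i - a i)| :=
  (h.volume_le_tsum f hI).trans <| ENNReal.tsum_le_tsum fun _ =>
    (measure_mono inter_subset_left).trans (volume_image_segment f _ _).le

lemma mk_mem_unitSquare {u v : ℝ} (hu : u ∈ Icc (0:ℝ) 1) (hv : v ∈ Icc (0:ℝ) 1) :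
    !₂[u, v] ∈ unitSquare := ⟨by simpa using hu, by simpa using hv⟩

/-- The strip `V = [0,1] × ℝ` for `k = 0` and `H = ℝ × [0,1]` for `k = 1`. -/
def strip (k : Fin 2) : Set Pt := {p | p k ∈ Icc (0:ℝ) 1}

lemma IsBarrier.one_le_tsum_volume_image_apply {s : ℕ → Set Pt}
    (h : IsBarrier (⋃ i, s i) unitSquare) (k : Fin 2) :
    1 ≤ ∑' i, volume ((fun p : Pt => p k) '' (s i ∩ strip k)) := by
  have hI : Icc 0 1 ⊆ EuclideanSpace.projₗ k '' unitSquare := fun c hc =>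
    ⟨!₂[c, c], mk_mem_unitSquare hc hc, by fin_cases k <;> simp⟩
  have := h.volume_le_tsum _ hI
  simp only [Real.volume_Icc, sub_zero, ENNReal.ofReal_one, ← image_inter_preimage] at this
  exact this

def diagonalWidth (v : Pt) : ℝ := |v 0 + v 1| + |v 0 - v 1|

lemma IsBarrier.four_le_tsum_diagonal {a b : ℕ → Pt}
    (h : IsBarrier (⋃ i, segment ℝ (a i) (b i)) unitSquare) :
    4 ≤ ∑' i, ENNReal.ofReal (diagonalWidth (b i - a i)) := by
  have hplus : Icc (0:ℝ) 2 ⊆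
      (EuclideanSpace.projₗ 0 + EuclideanSpace.projₗ 1 : Pt →ₗ[ℝ] ℝ) '' unitSquare :=
    fun c hc => ⟨!₂[c / 2, c / 2],
      mk_mem_unitSquare ⟨by linarith [hc.1], by linarith [hc.2]⟩
        ⟨by linarith [hc.1], by linarith [hc.2]⟩,
      by simp⟩
  have hminus : Icc (-1:ℝ) 1 ⊆
      (EuclideanSpace.projₗ 0 - EuclideanSpace.projₗ 1 : Pt →ₗ[ℝ] ℝ) '' unitSquare :=
    fun c hc => ⟨!₂[(1 + c) / 2, (1 - c) / 2],
      mk_mem_unitSquare ⟨by linarith [hc.1], by linarith [hc.2]⟩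
        ⟨by linarith [hc.2], by linarith [hc.1]⟩,
      by simp; ring⟩
  have hplus' := h.volume_le_tsum_segment _ hplus
  have hminus' := h.volume_le_tsum_segment _ hminus
  simp only [Real.volume_Icc, LinearMap.add_apply, LinearMap.sub_apply,
    PiLp.projₗ_apply] at hplus' hminus'
  simp_rw [diagonalWidth, ENNReal.ofReal_add (abs_nonneg _) (abs_nonneg _), ENNReal.tsum_add]
  calc (4 : ℝ≥0∞) = ENNReal.ofReal (2 - 0) + ENNReal.ofReal (1 - -1) := by norm_num
    _ ≤ _ := add_le_add hplus' hminus'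

lemma AlmostHorizontal.not_almostVertical {a b : Pt} (hab : a ≠ b)
    (hH : AlmostHorizontal a b) : ¬ AlmostVertical a b := fun hV =>
  hab (sub_eq_zero.mp (eq_zero_of_abs_apply_le (by norm_num) hV hH)).symm

def coordShadow (k : Fin 2) (a b : Pt) : ℝ≥0∞ :=
  volume ((fun p : Pt => p k) '' (segment ℝ a b ∩ strip k))

lemma coordShadow_le (k : Fin 2) (a b : Pt) :
    coordShadow k a b ≤ ENNReal.ofReal |(b - a) k| :=
  (measure_mono (image_mono inter_subset_left)).trans
    (volume_image_segment (EuclideanSpace.projₗ k) a b).le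

lemma coordShadow_add_le (k : Fin 2) (a b : Pt) :
    coordShadow k a b + μH[1] (segment ℝ a b \ strip k) ≤ ENNReal.ofReal ‖b - a‖ :=
  calc _ ≤ μH[1] (segment ℝ a b ∩ strip k) + μH[1] (segment ℝ a b \ strip k) :=
        add_le_add_left (EuclideanSpace.volume_image_apply_le k _) _
    _ = ENNReal.ofReal ‖b - a‖ := by
        have : MeasurableSet (strip k) := measurableSet_Icc.preimage (by fun_prop)
        rw [measure_inter_add_sdiff _ this,
          hausdorffMeasure_segment, edist_dist, dist_comm, dist_eq_norm]

lemma diagonalWidth_le (v : Pt) : diagonalWidth v ≤ 2 * ‖v‖ := by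
  have h k : |v k| ≤ ‖v‖ := by simpa using PiLp.norm_apply_le v k
  exact abs_add_add_abs_sub_le (h 0) (h 1)

lemma diagonalWidth_le_of_not_almostHorizontal_of_not_almostVertical {a b : Pt}
    (hH : ¬ AlmostHorizontal a b) (hV : ¬ AlmostVertical a b) :
    10 ^ 8 * diagonalWidth (b - a) ≤ (2 * 10 ^ 8 - 1) * ‖b - a‖ := by
  rw [AlmostHorizontal, not_le] at hH
  rw [AlmostVertical, not_le] at hV
  have := abs_add_add_abs_sub_le_of_le_abs (EuclideanSpace.norm_sq_fin_two _).symm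
    (norm_nonneg _) (by positivity) hV.le hH.le
  rw [show ((10 : ℝ) ^ (-4 : ℤ)) ^ 2 = 1 / 10 ^ 8 by norm_num] at this
  unfold diagonalWidth
  nlinarith [norm_nonneg (b - a)]

lemma ENNReal.add_add_le_ofReal {x y z : ℝ≥0∞} {p q r s : ℝ} (hp : 0 ≤ p) (hq : 0 ≤ q)
    (hr : 0 ≤ r) (hx : x ≤ ENNReal.ofReal p) (hy : y ≤ ENNReal.ofReal q)
    (hz : z ≤ ENNReal.ofReal r) (h : p + q + r ≤ s) : x + y + z ≤ ENNReal.ofReal s :=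
  calc x + y + z ≤ ENNReal.ofReal p + ENNReal.ofReal q + ENNReal.ofReal r := by gcongr
    _ = ENNReal.ofReal (p + q + r) := by
      rw [ENNReal.ofReal_add (by positivity) hr, ENNReal.ofReal_add hp hq]
    _ ≤ ENNReal.ofReal s := ENNReal.ofReal_le_ofReal h

open Classical in
lemma shadows_add_outside_strips_le {a b : Pt} (hab : a ≠ b) :
    coordShadow 0 a b + coordShadow 1 a b + ENNReal.ofReal (10 ^ 8 * diagonalWidth (b - a))
      + (if AlmostHorizontal a b then μH[1] (segment ℝ a b \ strip 0) else 0)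
      + (if AlmostVertical a b then μH[1] (segment ℝ a b \ strip 1) else 0)
    ≤ ENNReal.ofReal ((2 * 10 ^ 8 + 1 + 10 ^ (-4 : ℤ)) * ‖b - a‖) := by
  have hD := diagonalWidth_le (b - a)
  have hD0 : 0 ≤ 10 ^ 8 * diagonalWidth (b - a) := by unfold diagonalWidth; positivity
  have hε : 0 ≤ (10 : ℝ) ^ (-4 : ℤ) * ‖b - a‖ := by positivity
  by_cases hH : AlmostHorizontal a b
  · rw [if_pos hH, if_neg (hH.not_almostVertical hab), add_zero]
    refine Eq.trans_le (by ring) (ENNReal.add_add_le_ofReal (norm_nonneg _) (abs_nonneg _) hD0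
      (coordShadow_add_le 0 a b) (coordShadow_le 1 a b) le_rfl ?_)
    unfold AlmostHorizontal at hH
    linarith
  by_cases hV : AlmostVertical a b
  · rw [if_neg hH, if_pos hV, add_zero]
    refine Eq.trans_le (by ring) (ENNReal.add_add_le_ofReal (abs_nonneg _) (norm_nonneg _) hD0
      (coordShadow_le 0 a b) (coordShadow_add_le 1 a b) le_rfl ?_)
    unfold AlmostVertical at hV
    linarith
  rw [if_neg hH, if_neg hV, add_zero, add_zero]
  refine ENNReal.add_add_le_ofReal (abs_nonneg _) (abs_nonneg _) hD0
    (coordShadow_le 0 a b) (coordShadow_le 1 a b) le_rfl ?_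
  have h k : |(b - a) k| ≤ ‖b - a‖ := by simpa using PiLp.norm_apply_le (b - a) k
  linarith [h 0, h 1, diagonalWidth_le_of_not_almostHorizontal_of_not_almostVertical hH hV]

open Classical in
lemma tsum_subtype_eq_tsum_ite {α β : Type*} [AddCommMonoid α] [TopologicalSpace α]
    (p : β → Prop) (f : β → α) :
    ∑' i : {j // p j}, f i = ∑' i, if p i then f i else 0 :=
  tsum_subtype {j | p j} f

lemma IsBarrier.le_tsum_shadows {a b : ℕ → Pt}
    (hbar : IsBarrier (⋃ i, segment ℝ (a i) (b i)) unitSquare) :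
    ENNReal.ofReal (2 + 4 * 10 ^ 8) ≤ ∑' i, (coordShadow 0 (a i) (b i)
      + coordShadow 1 (a i) (b i) + ENNReal.ofReal (10 ^ 8 * diagonalWidth (b i - a i))) := by
  simp only [ENNReal.tsum_add, ENNReal.ofReal_mul (by norm_num : (0:ℝ) ≤ 10 ^ 8),
    ENNReal.tsum_mul_left]
  calc ENNReal.ofReal (2 + 4 * 10 ^ 8) = 1 + 1 + ENNReal.ofReal (10 ^ 8) * 4 := by
        rw [ENNReal.ofReal_add (by norm_num) (by norm_num), ENNReal.ofReal_mul (by norm_num)]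
        norm_num
    _ ≤ _ := by
      gcongr
      exacts [hbar.one_le_tsum_volume_image_apply 0, hbar.one_le_tsum_volume_image_apply 1,
        hbar.four_le_tsum_diagonal]

lemma tsum_outside_strips_le {a b : ℕ → Pt} (hab : ∀ i, a i ≠ b i)
    (hbar : IsBarrier (⋃ i, segment ℝ (a i) (b i)) unitSquare)
    (hsum : Summable fun i => ‖b i - a i‖)
    (hL : ∑' i, ‖b i - a i‖ ≤ 2 + 10 ^ (-12 : ℤ)) :
    (∑' i : {j // AlmostHorizontal (a j) (b j)}, μH[1] (segment ℝ (a i.1) (b i.1) \ strip 0))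
      + (∑' i : {j // AlmostVertical (a j) (b j)}, μH[1] (segment ℝ (a i.1) (b i.1) \ strip 1))
    ≤ ENNReal.ofReal ((9 / 2) * 10 ^ (-4 : ℤ)) := by
  classical
  set c : ℝ := 2 * 10 ^ 8 + 1 + 10 ^ (-4 : ℤ)
  have hbudget := calc
    _ ≤ ∑' i, ENNReal.ofReal (c * ‖b i - a i‖) :=
        ENNReal.tsum_le_tsum fun i => shadows_add_outside_strips_le (hab i)
    _ = ENNReal.ofReal (∑' i, c * ‖b i - a i‖) :=
        (ENNReal.ofReal_tsum_of_nonneg (fun i => by positivity) (hsum.mul_left c)).symm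
    _ ≤ ENNReal.ofReal (c * (2 + 10 ^ (-12 : ℤ))) :=
        ENNReal.ofReal_le_ofReal (by rw [tsum_mul_left]; gcongr)
  rw [ENNReal.tsum_add, ENNReal.tsum_add, add_assoc, ← tsum_subtype_eq_tsum_ite,
    ← tsum_subtype_eq_tsum_ite] at hbudget
  refine ENNReal.le_of_add_le_add_left ENNReal.ofReal_ne_top
    ((add_le_add_left hbar.le_tsum_shadows _).trans (hbudget.trans ?_))
  rw [← ENNReal.ofReal_add (by norm_num) (by norm_num)]
  exact ENNReal.ofReal_le_ofReal (by norm_num [c])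

/-- Lemma 5: for a segment barrier of the unit square of total length at most
2 + δ (δ = 10⁻¹², sin φ = 10⁻⁴), the part of the almost horizontal segments X outside the
vertical strip V = [0,1] × ℝ has total length at most (9/2) sin φ, and the part of the
almost vertical segments Y outside the horizontal strip H = ℝ × [0,1] has total length
at most (9/2) sin φ. -/
theorem X_outside_V_and_Y_outside_H_small
    (a b : ℕ → Pt) (hab : ∀ i, a i ≠ b i)
    (hbar : IsBarrier (⋃ i, segment ℝ (a i) (b i)) unitSquare)
    (hsum : Summable fun i => ‖b i - a i‖)
    (hL : ∑' i, ‖b i - a i‖ ≤ 2 + 10 ^ (-12 : ℤ)) :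
    (∑' i : {j : ℕ // AlmostHorizontal (a j) (b j)},
        μH[1] (segment ℝ (a i.1) (b i.1) \ {p : Pt | p 0 ∈ Icc (0:ℝ) 1})
      ≤ ENNReal.ofReal ((9/2) * 10 ^ (-4 : ℤ))) ∧
    (∑' i : {j : ℕ // AlmostVertical (a j) (b j)},
        μH[1] (segment ℝ (a i.1) (b i.1) \ {p : Pt | p 1 ∈ Icc (0:ℝ) 1})
      ≤ ENNReal.ofReal ((9/2) * 10 ^ (-4 : ℤ))) := by
  have h := tsum_outside_strips_le hab hbar hsum hL
  exact ⟨le_self_add.trans h, le_add_self.trans h⟩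
end
end
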